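/- For every natural number n, C_{2n+1}(x) − 2 = (x − 2)·(C_n(x) + C_{n−1}(x) + ⋯ + C_1(x) + 1)², i.e., C_{2n+1}(x) − 2 = (x−2)·U_{2n+1}(x)² where U_{2n+1}(x) = S_{n+1}(x) + S_n(x). -/

import Mathlib

/-!
Writing `x = q + q⁻¹`, one has `C_n = qⁿ + q⁻ⁿ`, `x - 2 = (q^½ - q^-½)²` and
`(x - 2)(S_{n+1} + S_n) = C_{n+1} - C_n`. Squaring the latter and expanding with the product
formula `C_m C_k = C_{m+k} + C_{m-k}` gives `(x - 2)(C_{2n+1} - 2)`; cancelling the monic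
factor `x - 2` yields the identity. Mathlib's `Polynomial.Chebyshev.S n` is `chebS (n + 1)`.
-/

open Polynomial

/-- Normalized Chebyshev polynomial of the first kind: `C 0 = 2`, `C 1 = X`,
`C (n+2) = X * C (n+1) - C n`. -/
noncomputable def chebC : ℕ → Polynomial ℤ
  | 0 => 2
  | 1 => X
  | n + 2 => X * chebC (n + 1) - chebC n

/-- Normalized Chebyshev polynomial of the second kind: `S 0 = 0`, `S 1 = 1`,
`S (n+2) = X * S (n+1) - S n`. -/
noncomputable def chebS : ℕ → Polynomial ℤ
  | 0 => 0
  | 1 => 1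
  | n + 2 => X * chebS (n + 1) - chebS n

namespace Polynomial.Chebyshev

variable {R : Type*} [CommRing R]

theorem X_sub_two_mul_S_add_S (n : ℤ) :
    (X - 2) * (S R n + S R (n - 1)) = C R (n + 1) - C R n := by
  linear_combination (norm := ring_nf) C_eq_S_sub_X_mul_S R n - C_eq_S_sub_X_mul_S R (n + 1)
    - 2 * S_add_one R n

theorem C_add_one_sub_C_sq (n : ℤ) :
    (C R (n + 1) - C R n) ^ 2 = (X - 2) * (C R (2 * n + 1) - 2) := by
  have h₁ := C_mul_C R (n + 1) (n + 1)
  have h₂ := C_mul_C R n n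
  have h₃ := C_mul_C R (n + 1) n
  have h₄ := C_add_one R (2 * n + 1)
  simp only [sub_self, add_sub_cancel_left, C_zero, C_one] at h₁ h₂ h₃
  linear_combination (norm := ring_nf) h₁ + h₂ - 2 * h₃ + h₄

theorem C_two_mul_add_one_sub_two (n : ℤ) :
    C R (2 * n + 1) - 2 = (X - 2) * (S R n + S R (n - 1)) ^ 2 := by
  have hX : IsLeftRegular (X - 2 : R[X]) := C_ofNat (R := R) 2 ▸ (monic_X_sub_C 2).isRegular.left
  apply hX
  dsimp only
  rw [← C_add_one_sub_C_sq, ← X_sub_two_mul_S_add_S]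
  ring

end Polynomial.Chebyshev

theorem chebC_eq_chebyshevC (n : ℕ) : chebC n = Chebyshev.C ℤ n := by
  induction n using chebC.induct with
  | case1 => simp [chebC]
  | case2 => simp [chebC]
  | case3 n ih₁ ih₂ =>
    rw [chebC, ih₁, ih₂]
    push_cast
    exact (Chebyshev.C_add_two ℤ n).symm

theorem chebS_eq_chebyshevS (n : ℕ) : chebS n = Chebyshev.S ℤ (n - 1) := by
  induction n using chebS.induct with
  | case1 => simp [chebS]
  | case2 => simp [chebS]
  | case3 n ih₁ ih₂ =>
    rw [chebS, ih₁, ih₂]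
    push_cast
    linear_combination (norm := ring_nf) -Chebyshev.S_add_one ℤ n

/-- `C_{2n+1} − 2 = (x−2)·(S_{n+1} + S_n)²`. -/
theorem chebC_odd_sub_two (n : ℕ) :
    chebC (2 * n + 1) - 2 = (X - 2) * (chebS (n + 1) + chebS n) ^ 2 := by
  rw [chebC_eq_chebyshevC, chebS_eq_chebyshevS, chebS_eq_chebyshevS]
  push_cast
  rw [add_sub_cancel_right]
  exact Chebyshev.C_two_mul_add_one_sub_two n
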